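/- arXiv:1203.0408 — 4 statements merged into one kernel-verified Lean document; each statement's English description precedes it below -/
import Mathlib

section
/- Let n be an even positive integer and define κ : (0,n) → ℝ by κ(x) = ∑_{k=1}^{n/2−1} (2/k) cos(2πxk/n) + (2/n) cos(πx). Then κ'(x) = (2π/n)(cos(πx) − 1)·cot(πx/n); in particular κ'(x) ≤ 0 on (0, n/2) and κ'(x) ≥ 0 on (n/2, n), so κ has a global minimum at x = n/2. -/
/-! With `n = 2m` and `t = πx/n`, the derivative of `κ` is `-(2π/n) (2 ∑_{k=1}^{m-1} sin 2kt + sin 2mt)`,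
and the sine sum telescopes: `sin t · ∑_{k=1}^{m-1} sin 2kt = sin mt · sin (m-1)t`. This gives
`κ'(x) = (2π/n)(cos πx - 1) cot t`. The first two factors have constant sign, and `cot t` changes sign
exactly at `t = π/2`, i.e. at `x = n/2`. -/

open Real Set

noncomputable def kappa (n : ℕ) (x : ℝ) : ℝ :=
  (∑ k ∈ Finset.Icc 1 (n / 2 - 1), (2 / (k : ℝ)) * cos (2 * π * x * k / n)) +
    (2 / n) * cos (π * x)

theorem isMinOn_Icc_of_deriv_nonpos_of_deriv_nonneg {f : ℝ → ℝ} {a b c : ℝ}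
    (hf : Differentiable ℝ f) (hab : ∀ x ∈ Ioo a b, deriv f x ≤ 0)
    (hbc : ∀ x ∈ Ioo b c, 0 ≤ deriv f x) : IsMinOn f (Icc a c) b := by
  intro x ⟨hax, hxc⟩
  rcases le_total x b with hxb | hbx
  · have hanti : AntitoneOn f (Icc a b) :=
      antitoneOn_of_deriv_nonpos (convex_Icc a b) hf.continuous.continuousOn
        hf.differentiableOn (by simpa only [interior_Icc] using hab)
    exact hanti ⟨hax, hxb⟩ ⟨hax.trans hxb, le_rfl⟩ hxb
  · have hmono : MonotoneOn f (Icc b c) :=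
      monotoneOn_of_deriv_nonneg (convex_Icc b c) hf.continuous.continuousOn
        hf.differentiableOn (by simpa only [interior_Icc] using hbc)
    exact hmono ⟨le_rfl, hbx.trans hxc⟩ ⟨hbx, hxc⟩ hbx

theorem sin_mul_sum_sin_two_mul (t : ℝ) (m : ℕ) :
    sin t * ∑ k ∈ Finset.Icc 1 m, sin (2 * k * t) = sin ((m + 1) * t) * sin (m * t) := by
  induction m with
  | zero => simp
  | succ m ih =>
    rw [Finset.sum_Icc_succ_top (by omega), mul_add, ih]
    push_cast
    have h1 : ((m : ℝ) + 1 + 1) * t = ((m : ℝ) + 1) * t + t := by ring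
    have h2 : (m : ℝ) * t = ((m : ℝ) + 1) * t - t := by ring
    have h3 : 2 * ((m : ℝ) + 1) * t = 2 * (((m : ℝ) + 1) * t) := by ring
    rw [h1, h2, h3, sin_add, sin_sub, sin_two_mul]
    ring

theorem sin_mul_two_mul_sum_sin_two_mul_add (t : ℝ) (m : ℕ) :
    sin t * (2 * ∑ k ∈ Finset.Icc 1 (m - 1), sin (2 * k * t) + sin (2 * m * t)) =
      (1 - cos (2 * m * t)) * cos t := by
  cases m with
  | zero => simp
  | succ m =>
    have hsum := sin_mul_sum_sin_two_mul t m
    rw [Nat.add_sub_cancel]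
    push_cast
    have h1 : 2 * ((m : ℝ) + 1) * t = 2 * (((m : ℝ) + 1) * t) := by ring
    have h2 : (m : ℝ) * t = ((m : ℝ) + 1) * t - t := by ring
    rw [h2, sin_sub] at hsum
    rw [h1, sin_two_mul, cos_two_mul]
    linear_combination 2 * hsum + 2 * cos t * sin_sq_add_cos_sq (((m : ℝ) + 1) * t)

theorem hasDerivAt_kappa (n : ℕ) (x : ℝ) :
    HasDerivAt (kappa n)
      (-(4 * π / n) * (∑ k ∈ Finset.Icc 1 (n / 2 - 1), sin (2 * π * x * k / n))
        - (2 * π / n) * sin (π * x)) x := by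
  have hsum : HasDerivAt
      (fun x : ℝ => ∑ k ∈ Finset.Icc 1 (n / 2 - 1), (2 / (k : ℝ)) * cos (2 * π * x * k / n))
      (∑ k ∈ Finset.Icc 1 (n / 2 - 1), -(4 * π / n) * sin (2 * π * x * k / n)) x := by
    refine HasDerivAt.fun_sum fun k hk => ?_
    have hk0 : (k : ℝ) ≠ 0 := Nat.cast_ne_zero.mpr (by grind)
    have hlin : HasDerivAt (fun y : ℝ => 2 * π * y * k / n) (2 * π * k / n) x := by
      simpa [mul_comm, mul_left_comm, mul_div_assoc] using
        (hasDerivAt_id x).const_mul (2 * π * k / n)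
    refine (hlin.cos.const_mul (2 / (k : ℝ))).congr_deriv ?_
    field_simp
    ring
  have hlast : HasDerivAt (fun x : ℝ => (2 / n) * cos (π * x)) (-(2 * π / n) * sin (π * x)) x :=
    (((hasDerivAt_id' x).const_mul π).cos.const_mul (2 / (n : ℝ))).congr_deriv (by ring)
  refine (hsum.add hlast).congr_deriv ?_
  rw [← Finset.mul_sum]
  ring

theorem deriv_kappa {n : ℕ} (hn : Even n) {x : ℝ} (hx : sin (π * x / n) ≠ 0) :
    deriv (kappa n) x = (2 * π / n) * (cos (π * x) - 1) * (cos (π * x / n) / sin (π * x / n)) := by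
  obtain ⟨m, rfl⟩ := hn
  have hm : ((m + m : ℕ) : ℝ) ≠ 0 := by
    rintro h
    simp [h] at hx
  have hpx : 2 * m * (π * x / (m + m : ℕ)) = π * x := by
    field_simp; push_cast; ring
  have hterm (k : ℕ) : sin (2 * π * x * k / (m + m : ℕ)) = sin (2 * k * (π * x / (m + m : ℕ))) := by
    ring_nf
  have htrig := sin_mul_two_mul_sum_sin_two_mul_add (π * x / (m + m : ℕ)) m
  rw [hpx] at htrig
  rw [(hasDerivAt_kappa _ x).deriv, Finset.sum_congr rfl fun k _ => hterm k,
    show (m + m) / 2 = m by omega, ← mul_div_assoc, eq_div_iff hx]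
  linear_combination (-(2 * π / ((m + m : ℕ) : ℝ))) * htrig

theorem sin_pi_mul_div_pos {n : ℕ} {x : ℝ} (hx : x ∈ Ioo 0 (n : ℝ)) : 0 < sin (π * x / n) := by
  have hn : (0 : ℝ) < n := hx.1.trans hx.2
  apply sin_pos_of_pos_of_lt_pi (by have := hx.1; positivity)
  rw [div_lt_iff₀ hn]
  nlinarith [pi_pos, hx.2]

theorem two_pi_div_mul_cos_sub_one_nonpos (n : ℕ) (y : ℝ) : 2 * π / n * (cos y - 1) ≤ 0 :=
  mul_nonpos_of_nonneg_of_nonpos (by positivity) (by linarith [cos_le_one y])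

theorem deriv_kappa_nonpos {n : ℕ} (hn : Even n) {x : ℝ} (hx : x ∈ Ioo 0 ((n : ℝ) / 2)) :
    deriv (kappa n) x ≤ 0 := by
  have hn0 : (0 : ℝ) < n := by linarith [hx.1.trans hx.2]
  have hsin := sin_pi_mul_div_pos (n := n) ⟨hx.1, by linarith [hx.2]⟩
  have hcos : 0 ≤ cos (π * x / n) := by
    have hx0 := hx.1
    refine cos_nonneg_of_mem_Icc ⟨by linarith [pi_pos, show 0 ≤ π * x / n by positivity], ?_⟩
    rw [div_le_iff₀ hn0]
    nlinarith [pi_pos, hx.2]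
  rw [deriv_kappa hn hsin.ne']
  exact mul_nonpos_of_nonpos_of_nonneg (two_pi_div_mul_cos_sub_one_nonpos n _)
    (div_nonneg hcos hsin.le)

theorem deriv_kappa_nonneg {n : ℕ} (hn : Even n) {x : ℝ} (hx : x ∈ Ioo ((n : ℝ) / 2) n) :
    0 ≤ deriv (kappa n) x := by
  have hn0 : (0 : ℝ) < n := by linarith [hx.1.trans hx.2]
  have hsin := sin_pi_mul_div_pos (n := n) ⟨by linarith [hx.1], hx.2⟩
  have hcos : cos (π * x / n) ≤ 0 := by
    refine cos_nonpos_of_pi_div_two_le_of_le ?_ ?_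
    · rw [le_div_iff₀ hn0]
      nlinarith [pi_pos, hx.1]
    · rw [div_le_iff₀ hn0]
      nlinarith [pi_pos, hx.2]
  rw [deriv_kappa hn hsin.ne']
  exact mul_nonneg_of_nonpos_of_nonpos (two_pi_div_mul_cos_sub_one_nonpos n _)
    (div_nonpos_of_nonpos_of_nonneg hcos hsin.le)

open Real in
theorem kappa_deriv_and_min_general (n : ℕ) (heven : Even n) :
    let κ : ℝ → ℝ := fun x =>
      (∑ k ∈ Finset.Icc 1 (n / 2 - 1), (2 / (k : ℝ)) * Real.cos (2 * π * x * k / n)) +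
        (2 / n) * Real.cos (π * x)
    (∀ x ∈ Set.Ioo (0 : ℝ) (n : ℝ), deriv κ x =
        (2 * π / n) * (Real.cos (π * x) - 1) * (Real.cos (π * x / n) / Real.sin (π * x / n))) ∧
    (∀ x ∈ Set.Ioo (0 : ℝ) ((n : ℝ) / 2), deriv κ x ≤ 0) ∧
    (∀ x ∈ Set.Ioo ((n : ℝ) / 2) (n : ℝ), 0 ≤ deriv κ x) ∧
    (∀ x ∈ Set.Ioo (0 : ℝ) (n : ℝ), κ ((n : ℝ) / 2) ≤ κ x) := by
  intro κ
  have hmin : IsMinOn (kappa n) (Icc 0 n) ((n : ℝ) / 2) :=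
    isMinOn_Icc_of_deriv_nonpos_of_deriv_nonneg (fun x => (hasDerivAt_kappa n x).differentiableAt)
      (fun _ hx => deriv_kappa_nonpos heven hx) (fun _ hx => deriv_kappa_nonneg heven hx)
  exact ⟨fun _ hx => deriv_kappa heven (sin_pi_mul_div_pos hx).ne',
    fun _ hx => deriv_kappa_nonpos heven hx, fun _ hx => deriv_kappa_nonneg heven hx,
    fun _ hx => hmin (Ioo_subset_Icc_self hx)⟩

open Real in
theorem kappa_deriv_and_min (n : ℕ) (hn : 0 < n) (heven : Even n) :
    let κ : ℝ → ℝ := fun x =>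
      (∑ k ∈ Finset.Icc 1 (n / 2 - 1), (2 / (k : ℝ)) * Real.cos (2 * π * x * k / n)) +
        (2 / n) * Real.cos (π * x)
    (∀ x ∈ Set.Ioo (0 : ℝ) (n : ℝ), deriv κ x =
        (2 * π / n) * (Real.cos (π * x) - 1) * (Real.cos (π * x / n) / Real.sin (π * x / n))) ∧
    (∀ x ∈ Set.Ioo (0 : ℝ) ((n : ℝ) / 2), deriv κ x ≤ 0) ∧
    (∀ x ∈ Set.Ioo ((n : ℝ) / 2) (n : ℝ), 0 ≤ deriv κ x) ∧
    (∀ x ∈ Set.Ioo (0 : ℝ) (n : ℝ), κ ((n : ℝ) / 2) ≤ κ x) :=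
  kappa_deriv_and_min_general n heven
end

section
/- Let n be an even positive integer and G = ℤ/n with Lee distance δ(g,0) = min(g mod n, n − (g mod n)). The function λ(j) = ∑_{g=1}^{n−1} δ(g,0)^{−1} e^{2πijg/n}, for j ∈ {0,…,n−1}, attains its unique minimum at j = n/2. -/
/-!
Write `n = 2 * (k + 1)` and `δ g = min g (n - g)`. The imaginary parts of the summands for `g` and
`n - g` cancel, so `λ j` is real. With `x = π * (j - (k + 1)) / (k + 1)` the `g`-th summand of
`λ j - λ (k + 1)` is `(-1) ^ g * (cos (g * x) - 1) / δ g`; folding `g ↔ n - g` turns the difference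
into `2 * altCosSum k x`. This function vanishes at `0`, is even, and its derivative `altSinSum k`
satisfies `2 cos (x / 2) * altSinSum k x = sin (x / 2) * (1 + (-1) ^ k * cos ((k + 1) * x))`, which
is nonnegative on `(0, π)` and positive on `(0, π / (k + 1))`. Hence `altCosSum k x > 0` for
`0 < |x| ≤ π`, which covers every `j ≠ k + 1` with `j < n`.
-/

open Real Finset

noncomputable def altSinSum (k : ℕ) (x : ℝ) : ℝ :=
  ∑ d ∈ range k, (-1) ^ d * sin ((d + 1) * x) + (-1) ^ k / 2 * sin ((k + 1) * x)

noncomputable def altCosSum (k : ℕ) (x : ℝ) : ℝ :=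
  ∑ d ∈ range k, (-1) ^ d / (d + 1) * (1 - cos ((d + 1) * x)) +
    (-1) ^ k / (2 * (k + 1)) * (1 - cos ((k + 1) * x))

theorem two_mul_cos_half_mul_altSinSum (k : ℕ) (x : ℝ) :
    2 * cos (x / 2) * altSinSum k x = sin (x / 2) * (1 + (-1) ^ k * cos ((k + 1) * x)) := by
  have hsin : sin x = 2 * sin (x / 2) * cos (x / 2) := by rw [← sin_two_mul]; ring_nf
  have hcos : cos x = 1 - 2 * sin (x / 2) ^ 2 := by rw [← cos_two_mul_eq_one_sub]; ring_nf
  have pyth := sin_sq_add_cos_sq (x / 2)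
  induction k with
  | zero =>
    simp only [altSinSum, range_zero, sum_empty, zero_add, pow_zero, Nat.cast_zero, one_mul]
    rw [hsin, hcos]
    linear_combination 2 * sin (x / 2) * pyth
  | succ k ih =>
    have hs := sin_add ((k + 1) * x) x
    have hc := cos_add ((k + 1) * x) x
    rw [show (k + 1) * x + x = ((k + 1 : ℕ) + 1) * x by push_cast; ring] at hs hc
    simp only [altSinSum, sum_range_succ, pow_succ] at ih ⊢
    rw [hs, hc, hsin, hcos]
    linear_combination ih - 2 * (-1) ^ k * sin (x / 2) * cos ((k + 1) * x) * pyth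

theorem altSinSum_nonneg {k : ℕ} {x : ℝ} (hx₀ : 0 < x) (hx : x < π) : 0 ≤ altSinSum k x := by
  have hcos : 0 < 2 * cos (x / 2) := by
    have := cos_pos_of_mem_Ioo (x := x / 2) ⟨by linarith, by linarith⟩
    positivity
  have hsin : 0 ≤ sin (x / 2) := sin_nonneg_of_nonneg_of_le_pi (by linarith) (by linarith)
  have hbound : -1 ≤ (-1) ^ k * cos ((k + 1) * x) := by
    have := abs_le.mp (abs_cos_le_one ((k + 1) * x))
    rcases neg_one_pow_eq_or ℝ k with h | h <;> rw [h] <;> linarith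
  refine nonneg_of_mul_nonneg_right ?_ hcos
  rw [two_mul_cos_half_mul_altSinSum]
  exact mul_nonneg hsin (by linarith)

theorem altSinSum_pos {k : ℕ} {x : ℝ} (hx₀ : 0 < x) (hx : (k + 1) * x < π) :
    0 < altSinSum k x := by
  have hxk : x ≤ (k + 1) * x := le_mul_of_one_le_left hx₀.le (by simp)
  have hcos : 0 < 2 * cos (x / 2) := by
    have := cos_pos_of_mem_Ioo (x := x / 2) ⟨by linarith [pi_pos], by linarith⟩
    positivity
  have hsin : 0 < sin (x / 2) := sin_pos_of_pos_of_lt_pi (by linarith) (by linarith)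
  have hbound : -1 < (-1) ^ k * cos ((k + 1) * x) := by
    have h₀ : 0 < (k + 1) * x := by positivity
    have h₁ : cos ((k + 1) * x) < 1 := by
      simpa using cos_lt_cos_of_nonneg_of_le_pi le_rfl hx.le h₀
    have h₂ : -1 < cos ((k + 1) * x) := by
      simpa using cos_lt_cos_of_nonneg_of_le_pi h₀.le le_rfl hx
    rcases neg_one_pow_eq_or ℝ k with h | h <;> rw [h] <;> linarith
  refine pos_of_mul_pos_right ?_ hcos.le
  rw [two_mul_cos_half_mul_altSinSum]
  exact mul_pos hsin (by linarith)

theorem hasDerivAt_altCosSum (k : ℕ) (x : ℝ) : HasDerivAt (altCosSum k) (altSinSum k x) x := by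
  have hterm (a c : ℝ) (ha : a ≠ 0) :
      HasDerivAt (fun y => c / a * (1 - cos (a * y))) (c * sin (a * x)) x := by
    have := (((hasDerivAt_id x).const_mul a).cos.const_sub 1).const_mul (c / a)
    refine this.congr_deriv ?_
    simp only [id, mul_one, neg_mul, neg_neg]
    field_simp
  unfold altCosSum altSinSum
  refine (HasDerivAt.fun_sum fun (d : ℕ) _ => hterm (d + 1) ((-1) ^ d) (by positivity)).add ?_
  simpa only [div_div] using hterm (k + 1) ((-1) ^ k / 2) (by positivity)

theorem altCosSum_zero (k : ℕ) : altCosSum k 0 = 0 := by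
  simp [altCosSum]

theorem altCosSum_neg (k : ℕ) (x : ℝ) : altCosSum k (-x) = altCosSum k x := by
  simp only [altCosSum, mul_neg, cos_neg]

-- `altSinSum` may vanish inside `(0, π)`, but not on `(0, π / (k + 1))`.
theorem altCosSum_pos_of_pos_of_le_pi {k : ℕ} {x : ℝ} (hx₀ : 0 < x) (hx : x ≤ π) :
    0 < altCosSum k x := by
  have hdiff : Differentiable ℝ (altCosSum k) := fun y =>
    (hasDerivAt_altCosSum k y).differentiableAt
  have hk : (0 : ℝ) < k + 1 := by positivity
  set y := min x (π / (k + 1))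
  have hy₀ : 0 < y := lt_min hx₀ (by positivity)
  have hyk : y ≤ π / (k + 1) := min_le_right _ _
  have hkπ : π / (k + 1) ≤ π := div_le_self pi_pos.le (by simp)
  have hstrict : StrictMonoOn (altCosSum k) (Set.Icc 0 (π / (k + 1))) := by
    refine strictMonoOn_of_deriv_pos (convex_Icc _ _) hdiff.continuous.continuousOn fun z hz => ?_
    rw [interior_Icc] at hz
    rw [(hasDerivAt_altCosSum k z).deriv]
    exact altSinSum_pos hz.1 (by rw [mul_comm]; exact (lt_div_iff₀ hk).mp hz.2)
  have hmono : MonotoneOn (altCosSum k) (Set.Icc 0 π) := by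
    refine monotoneOn_of_deriv_nonneg (convex_Icc _ _) hdiff.continuous.continuousOn
      hdiff.differentiableOn fun z hz => ?_
    rw [interior_Icc] at hz
    rw [(hasDerivAt_altCosSum k z).deriv]
    exact altSinSum_nonneg hz.1 hz.2
  calc 0 = altCosSum k 0 := (altCosSum_zero k).symm
    _ < altCosSum k y := hstrict ⟨le_rfl, by positivity⟩ ⟨hy₀.le, hyk⟩ hy₀
    _ ≤ altCosSum k x := hmono ⟨hy₀.le, hyk.trans hkπ⟩ ⟨hx₀.le, hx⟩ (min_le_left _ _)

theorem altCosSum_pos {k : ℕ} {x : ℝ} (hx₀ : x ≠ 0) (hx : |x| ≤ π) : 0 < altCosSum k x := by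
  rcases abs_choice x with h | h
  · exact h ▸ altCosSum_pos_of_pos_of_le_pi (abs_pos.mpr hx₀) hx
  · rw [← altCosSum_neg, ← h]
    exact altCosSum_pos_of_pos_of_le_pi (abs_pos.mpr hx₀) hx

theorem sum_Icc_one_sub_reflect {M : Type*} [AddCommMonoid M] (f : ℕ → M) (n : ℕ) :
    ∑ g ∈ Icc 1 (n - 1), f (n - g) = ∑ g ∈ Icc 1 (n - 1), f g := by
  refine sum_nbij' (fun g => n - g) (fun g => n - g) ?_ ?_ ?_ ?_ fun g _ => rfl <;>
    intro g hg <;> simp only [mem_Icc] at hg ⊢ <;> omega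

theorem sum_Icc_of_reflect_eq {M : Type*} [AddCommMonoid M] (f : ℕ → M) (k : ℕ)
    (hf : ∀ g ≤ 2 * (k + 1), f (2 * (k + 1) - g) = f g) :
    ∑ g ∈ Icc 1 (2 * (k + 1) - 1), f g = 2 • ∑ d ∈ range k, f (d + 1) + f (k + 1) := by
  have hIcc : Icc 1 (2 * (k + 1) - 1) = Ico 1 (1 + ((k + 1) + k)) := by
    ext g; simp only [mem_Icc, mem_Ico]; omega
  have hupper : ∑ d ∈ range k, f (1 + (k + 1 + d)) = ∑ d ∈ range k, f (d + 1) := by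
    rw [← sum_range_reflect]
    refine sum_congr rfl fun d hd => ?_
    rw [mem_range] at hd
    rw [← hf (d + 1) (by omega)]
    congr 1
    omega
  rw [hIcc, sum_Ico_eq_sum_range, Nat.add_sub_cancel_left, sum_range_add, sum_range_succ,
    hupper, two_nsmul]
  simp only [add_comm 1]
  abel

theorem cos_two_pi_mul_div_two_mul (k j g : ℕ) :
    cos (2 * π * j * g / (2 * (k + 1) : ℕ)) =
      (-1) ^ g * cos (g * (π * (j - (k + 1)) / (k + 1))) := by
  rw [← cos_add_nat_mul_pi]
  congr 1
  push_cast
  field_simp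
  ring

theorem cos_two_pi_mul_div_reflect {n : ℕ} (hn : n ≠ 0) (j : ℕ) {g : ℕ} (hg : g ≤ n) :
    cos (2 * π * j * (n - g : ℕ) / n) = cos (2 * π * j * g / n) := by
  rw [← cos_nat_mul_two_pi_sub _ j]
  congr 1
  push_cast [hg]
  field_simp
  ring

theorem sin_two_pi_mul_div_reflect {n : ℕ} (hn : n ≠ 0) (j : ℕ) {g : ℕ} (hg : g ≤ n) :
    sin (2 * π * j * (n - g : ℕ) / n) = -sin (2 * π * j * g / n) := by
  rw [← sin_nat_mul_two_pi_sub _ j]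
  congr 1
  push_cast [hg]
  field_simp

theorem abs_pi_mul_sub_div_le_pi {j m : ℝ} (hm : 0 < m) (hj₀ : 0 ≤ j) (hj : j ≤ 2 * m) :
    |π * (j - m) / m| ≤ π := by
  rw [abs_div, abs_mul, abs_of_pos pi_pos, abs_of_pos hm, div_le_iff₀ hm]
  exact mul_le_mul_of_nonneg_left (abs_sub_le_iff.mpr ⟨by linarith, by linarith⟩) pi_pos.le

noncomputable def leeEigenvalue (n j : ℕ) : ℂ :=
  ∑ g ∈ Icc 1 (n - 1), ((min g (n - g) : ℕ) : ℂ)⁻¹ * Complex.exp (2 * π * Complex.I * j * g / n)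

theorem leeEigenvalue_re (n j : ℕ) :
    (leeEigenvalue n j).re =
      ∑ g ∈ Icc 1 (n - 1), ((min g (n - g) : ℕ) : ℝ)⁻¹ * cos (2 * π * j * g / n) := by
  simp [leeEigenvalue, Complex.re_sum, Complex.exp_re]

theorem leeEigenvalue_im (n j : ℕ) :
    (leeEigenvalue n j).im =
      ∑ g ∈ Icc 1 (n - 1), ((min g (n - g) : ℕ) : ℝ)⁻¹ * sin (2 * π * j * g / n) := by
  simp [leeEigenvalue, Complex.im_sum, Complex.exp_im]

theorem leeEigenvalue_im_eq_zero (n j : ℕ) : (leeEigenvalue n j).im = 0 := by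
  set f : ℕ → ℝ := fun g => ((min g (n - g) : ℕ) : ℝ)⁻¹ * sin (2 * π * j * g / n)
  have hreflect : ∑ g ∈ Icc 1 (n - 1), f (n - g) = -∑ g ∈ Icc 1 (n - 1), f g := by
    rw [← sum_neg_distrib]
    refine sum_congr rfl fun g hg => ?_
    rw [mem_Icc] at hg
    simp only [f, sin_two_pi_mul_div_reflect (by omega : n ≠ 0) j (by omega : g ≤ n),
      Nat.sub_sub_self (by omega : g ≤ n), min_comm (n - g) g, mul_neg]
  rw [leeEigenvalue_im]
  have := sum_Icc_one_sub_reflect f n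
  linarith

theorem leeEigenvalue_re_sub_re_half (k j : ℕ) :
    (leeEigenvalue (2 * (k + 1)) j).re - (leeEigenvalue (2 * (k + 1)) (k + 1)).re =
      2 * altCosSum k (π * (j - (k + 1)) / (k + 1)) := by
  set n := 2 * (k + 1)
  set x := π * (j - (k + 1)) / (k + 1)
  set f : ℕ → ℝ := fun g =>
    ((min g (n - g) : ℕ) : ℝ)⁻¹ * (cos (2 * π * j * g / n) - cos (2 * π * (k + 1 : ℕ) * g / n))
  have hf : ∀ g ≤ n, f (n - g) = f g := fun g hg => by
    simp only [f, cos_two_pi_mul_div_reflect (by omega : n ≠ 0) _ hg, Nat.sub_sub_self hg,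
      min_comm (n - g) g]
  have hfx (g : ℕ) : f g = ((min g (n - g) : ℕ) : ℝ)⁻¹ * ((-1) ^ g * (cos (g * x) - 1)) := by
    simp only [f, n, cos_two_pi_mul_div_two_mul, x]
    push_cast
    rw [sub_self, mul_zero, zero_div, mul_zero, cos_zero, mul_one]
    ring
  rw [leeEigenvalue_re, leeEigenvalue_re, ← sum_sub_distrib]
  simp_rw [← mul_sub]
  rw [sum_Icc_of_reflect_eq f k hf]
  have hterm (d : ℕ) (hd : d ≤ k) :
      f (d + 1) = (-1) ^ d / (d + 1) * (1 - cos ((d + 1) * x)) := by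
    rw [hfx, min_eq_left (by omega), pow_succ]
    push_cast
    field_simp
    ring
  rw [sum_congr rfl fun d hd => hterm d (mem_range.mp hd).le, hterm k le_rfl, altCosSum,
    nsmul_eq_mul, Nat.cast_two, mul_add]
  congr 1
  field_simp

open Complex in
theorem cycle_eigenvalue_unique_min (n : ℕ) (hn : 0 < n) (heven : Even n) :
    let lam : ℕ → ℂ := fun j => ∑ g ∈ Finset.Icc 1 (n - 1),
      (((min g (n - g) : ℕ) : ℂ))⁻¹ * Complex.exp (2 * Real.pi * Complex.I * j * g / n)
    (∀ j < n, (lam j).im = 0) ∧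
      (∀ j < n, j ≠ n / 2 → (lam (n / 2)).re < (lam j).re) := by
  intro lam
  obtain ⟨k, rfl⟩ : ∃ k, n = 2 * (k + 1) := by
    obtain ⟨r, rfl⟩ := heven
    exact ⟨r - 1, by omega⟩
  refine ⟨fun j _ => leeEigenvalue_im_eq_zero _ j, fun j hj hjk => ?_⟩
  rw [Nat.mul_div_cancel_left _ two_pos] at hjk ⊢
  have hk : (0 : ℝ) < k + 1 := by positivity
  have hjk' : (j : ℝ) - (k + 1) ≠ 0 := sub_ne_zero.mpr (by exact_mod_cast hjk)
  have hx₀ : π * (j - (k + 1)) / (k + 1) ≠ 0 := by positivity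
  have hx := abs_pi_mul_sub_div_le_pi hk j.cast_nonneg (by exact_mod_cast hj.le)
  have hdiff := leeEigenvalue_re_sub_re_half k j
  have hpos := altCosSum_pos (k := k) hx₀ hx
  change (leeEigenvalue _ _).re < (leeEigenvalue _ _).re
  linarith
end

section
/- Let d ≥ 1, G = (ℤ/2)^d with Hamming distance δ, and f : ℤ₊ → ℝ₊ with (−1)^m (Δ^m f)(x) > 0 for all m ≥ 0 and x ≥ 1. For characters χ ∈ {−1,1}^d define λ(χ) = ∑_{g≠0} f(δ(g,0)) ∏_i χ_i^{g_i}. If χ and χ̃ differ only in the first coordinate with χ₁ = 1, χ̃₁ = −1, then λ(χ) − λ(χ̃) = 2 ∑_{l=0}^{q} binomial(q,l) (−1)^{d−1−q} (Δ^{d−1−q} f)(l+1) > 0, where q is the number of ones among χ₂,…,χ_d. -/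
/-!
Identify `g ∈ (ℤ/2)^d` with its support `T`, so that
`λ(ψ) = ∑_{T ≠ ∅} f(#T) ∏_{i ∈ T} ψ i`. Only the sets containing the first coordinate see
the flip, so `λ(χ) - λ(χ̃) = 2 ∑_{U ⊆ {2,…,d}} f(#U + 1) ∏_{i ∈ U} χ i`. Splitting `U` into
its `+1` and `-1` coordinates, the sum over the `-1` part is an alternating binomial sum,
i.e. `(-1)^p Δ^p f`, and the sum over the `+1` part only depends on its size. Complete
monotonicity makes every term positive.
-/

open Finset fwdDiff

variable {ι R : Type*}

lemma sum_powerset_neg_one_pow_card_mul_eq_fwdDiff_iter [CommRing R] (g : ℕ → R) (x : ℕ)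
    (B : Finset ι) :
    ∑ T ∈ B.powerset, (-1 : R) ^ #T * g (x + #T) = (-1) ^ #B * (Δ_[1])^[#B] g x := by
  rw [sum_powerset_apply_card (fun k => (-1 : R) ^ k * g (x + k)), fwdDiff_iter_eq_sum_shift,
    mul_sum]
  refine sum_congr rfl fun k hk => ?_
  have hsign : (-1 : R) ^ #B * (-1) ^ (#B - k) = (-1) ^ k := by
    rw [← pow_add, show #B + (#B - k) = 2 * (#B - k) + k by grind, pow_add,
      pow_mul, neg_one_sq, one_pow, one_mul]
  rw [nsmul_eq_mul, zsmul_eq_mul, smul_eq_mul, mul_one, ← hsign]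
  push_cast
  ring

lemma Finset.sum_powerset_union_of_disjoint [DecidableEq ι] {M : Type*} [AddCommMonoid M]
    (F : Finset ι → M) {A B : Finset ι} (h : Disjoint A B) :
    ∑ U ∈ (A ∪ B).powerset, F U = ∑ S ∈ A.powerset, ∑ T ∈ B.powerset, F (S ∪ T) := by
  induction A using Finset.induction_on generalizing F with
  | empty => simp
  | insert a A ha ih =>
    rw [disjoint_insert_left] at h
    rw [insert_union, sum_powerset_insert (by simp [ha, h.1]), sum_powerset_insert ha,
      ih _ h.2, ih (fun U => F (insert a U)) h.2]
    simp only [insert_union]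

section

variable [DecidableEq ι] [CommRing R]

lemma sum_powerset_insert_sub_of_flip (f : ℕ → R) {a : ι} {s : Finset ι} (ha : a ∉ s)
    {ψ ψ' : ι → R} (hψa : ψ a = 1) (hψ'a : ψ' a = -1) (hs : ∀ i ∈ s, ψ' i = ψ i) :
    ∑ T ∈ (insert a s).powerset, f #T * ∏ i ∈ T, ψ i -
        ∑ T ∈ (insert a s).powerset, f #T * ∏ i ∈ T, ψ' i =
      2 * ∑ U ∈ s.powerset, f (#U + 1) * ∏ i ∈ U, ψ i := by
  have hprod : ∀ U ∈ s.powerset, ∏ i ∈ U, ψ' i = ∏ i ∈ U, ψ i := fun U hU =>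
    prod_congr rfl fun i hi => hs i (mem_powerset.1 hU hi)
  have hsame :
      ∑ U ∈ s.powerset, f #U * ∏ i ∈ U, ψ' i = ∑ U ∈ s.powerset, f #U * ∏ i ∈ U, ψ i :=
    sum_congr rfl fun U hU => by rw [hprod U hU]
  rw [sum_powerset_insert ha, sum_powerset_insert ha, hsame, add_sub_add_left_eq_sub,
    ← sum_sub_distrib, mul_sum]
  refine sum_congr rfl fun U hU => ?_
  have haU : a ∉ U := fun h => ha (mem_powerset.1 hU h)
  rw [card_insert_of_notMem haU, prod_insert haU, prod_insert haU, hψa, hψ'a, hprod U hU]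
  ring

lemma sum_powerset_mul_prod_eq_sum_choose_mul_fwdDiff_iter [DecidableEq R] (g : ℕ → R) (x : ℕ)
    (E : Finset ι) {χ : ι → R} (hχ : ∀ i ∈ E, χ i = 1 ∨ χ i = -1) :
    ∑ U ∈ E.powerset, g (#U + x) * ∏ i ∈ U, χ i =
      ∑ l ∈ range (#{i ∈ E | χ i = 1} + 1), ((#{i ∈ E | χ i = 1}).choose l : R) *
        (-1) ^ #{i ∈ E | χ i ≠ 1} * (Δ_[1])^[#{i ∈ E | χ i ≠ 1}] g (l + x) := by
  set A := {i ∈ E | χ i = 1}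
  set B := {i ∈ E | χ i ≠ 1}
  have hAB : Disjoint A B := disjoint_filter_filter_not E E _
  have hχB : ∀ i ∈ B, χ i = -1 := fun i hi =>
    (hχ i (mem_filter.1 hi).1).resolve_left (mem_filter.1 hi).2
  calc ∑ U ∈ E.powerset, g (#U + x) * ∏ i ∈ U, χ i
      = ∑ S ∈ A.powerset, ∑ T ∈ B.powerset, g (#(S ∪ T) + x) * ∏ i ∈ S ∪ T, χ i := by
        rw [← sum_powerset_union_of_disjoint (fun U => g (#U + x) * ∏ i ∈ U, χ i) hAB,
          filter_union_filter_not_eq]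
    _ = ∑ S ∈ A.powerset, ∑ T ∈ B.powerset, (-1) ^ #T * g (#S + x + #T) := by
        refine sum_congr rfl fun S hS => sum_congr rfl fun T hT => ?_
        rw [mem_powerset] at hS hT
        have hST : Disjoint S T := hAB.mono hS hT
        rw [card_union_of_disjoint hST, prod_union hST,
          prod_eq_one fun i hi => (mem_filter.1 (hS hi)).2,
          prod_congr rfl fun i hi => hχB i (hT hi), prod_const]
        ring_nf
    _ = ∑ S ∈ A.powerset, (-1) ^ #B * (Δ_[1])^[#B] g (#S + x) :=
        sum_congr rfl fun S _ => sum_powerset_neg_one_pow_card_mul_eq_fwdDiff_iter g _ B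
    _ = _ := by
        rw [sum_powerset_apply_card (fun k => (-1) ^ #B * (Δ_[1])^[#B] g (k + x))]
        simp only [nsmul_eq_mul, mul_assoc]

end

def zmodTwoFunEquivFinset (ι : Type*) [Fintype ι] [DecidableEq ι] :
    (ι → ZMod 2) ≃ Finset ι where
  toFun g := {i | g i ≠ 0}
  invFun T i := if i ∈ T then 1 else 0
  left_inv g := funext fun i => by
    simp only [mem_filter, mem_univ, true_and]
    generalize g i = a
    revert a
    decide
  right_inv T := by ext i; by_cases i ∈ T <;> simp [*]

lemma sum_zmodTwo_fun_eq_sum_finset [Fintype ι] [DecidableEq ι] [CommSemiring R]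
    (f : ℕ → R) (ψ : ι → R) :
    ∑ g : ι → ZMod 2, f #{i | g i ≠ 0} * ∏ i, ψ i ^ (g i).val =
      ∑ T : Finset ι, f #T * ∏ i ∈ T, ψ i := by
  refine Fintype.sum_equiv (zmodTwoFunEquivFinset ι) _ _ fun g => ?_
  rw [zmodTwoFunEquivFinset, Equiv.coe_fn_mk, prod_filter]
  congr 1
  refine prod_congr rfl fun i _ => ?_
  generalize g i = a
  obtain rfl | rfl : a = 0 ∨ a = 1 := by revert a; decide
  · simp
  · simp [ZMod.val_one]

theorem hypercube_eigenvalue_flip_general (d : ℕ) (hd : 1 ≤ d)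
    (f : ℕ → ℝ)
    (hf : ∀ m x : ℕ, 1 ≤ x →
      0 < (-1 : ℝ) ^ m * ((fun F : ℕ → ℝ => fun y => F (y + 1) - F y)^[m] f) x)
    (χ χ' : Fin d → ℝ)
    (hχ : ∀ i, χ i = 1 ∨ χ i = -1)
    (h0 : χ ⟨0, hd⟩ = 1) (h0' : χ' ⟨0, hd⟩ = -1)
    (hrest : ∀ i : Fin d, i ≠ ⟨0, hd⟩ → χ' i = χ i) :
    let δ : (Fin d → ZMod 2) → ℕ := fun g => (Finset.univ.filter (fun i => g i ≠ 0)).card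
    let lam : (Fin d → ℝ) → ℝ := fun ψ =>
      ∑ g ∈ Finset.univ.erase (0 : Fin d → ZMod 2), f (δ g) * ∏ i, (ψ i) ^ (g i).val
    let q : ℕ := (Finset.univ.filter (fun i : Fin d => i ≠ ⟨0, hd⟩ ∧ χ i = 1)).card
    lam χ - lam χ' = 2 * ∑ l ∈ Finset.range (q + 1), (q.choose l : ℝ) * (-1 : ℝ) ^ (d - 1 - q) *
        ((fun F : ℕ → ℝ => fun y => F (y + 1) - F y)^[d - 1 - q] f) (l + 1) ∧
      0 < lam χ - lam χ' := by
  intro δ lam q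
  set i₀ : Fin d := ⟨0, hd⟩
  set E := univ.erase i₀
  have hlam : lam χ - lam χ' = ∑ T ∈ (insert i₀ E).powerset, f #T * ∏ i ∈ T, χ i -
      ∑ T ∈ (insert i₀ E).powerset, f #T * ∏ i ∈ T, χ' i := by
    simp only [lam, δ, sum_erase_eq_sub (mem_univ _), sum_zmodTwo_fun_eq_sum_finset,
      E, insert_erase (mem_univ i₀), powerset_univ]
    simp
  have hq : #{i ∈ E | χ i = 1} = q := by
    congr 1; ext; simp [E, i₀, and_comm]
  have hq' : #{i ∈ E | χ i ≠ 1} = d - 1 - q := by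
    have hsplit := card_filter_add_card_filter_not (s := E) (fun i => χ i = 1)
    rw [hq, card_erase_of_mem (mem_univ _), card_univ, Fintype.card_fin] at hsplit
    simp only [ne_eq]
    omega
  have key : lam χ - lam χ' =
      2 * ∑ l ∈ range (q + 1), (q.choose l : ℝ) * (-1) ^ (d - 1 - q) *
        (Δ_[1])^[d - 1 - q] f (l + 1) := by
    rw [hlam, sum_powerset_insert_sub_of_flip f (notMem_erase i₀ univ) h0 h0'
      (fun i hi => hrest i (ne_of_mem_erase hi)),
      sum_powerset_mul_prod_eq_sum_choose_mul_fwdDiff_iter f 1 E fun i _ => hχ i, hq, hq']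
  refine ⟨key, key ▸ mul_pos two_pos (sum_pos (fun l hl => ?_) nonempty_range_add_one)⟩
  rw [mul_assoc]
  exact mul_pos (Nat.cast_pos.2 (Nat.choose_pos (Nat.lt_succ_iff.1 (mem_range.1 hl))))
    (hf _ _ (Nat.le_add_left 1 l))

theorem hypercube_eigenvalue_flip (d : ℕ) (hd : 1 ≤ d)
    (f : ℕ → ℝ) (hfpos : ∀ x : ℕ, 1 ≤ x → 0 < f x)
    (hf : ∀ m x : ℕ, 1 ≤ x →
      0 < (-1 : ℝ) ^ m * ((fun F : ℕ → ℝ => fun y => F (y + 1) - F y)^[m] f) x)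
    (χ χ' : Fin d → ℝ)
    (hχ : ∀ i, χ i = 1 ∨ χ i = -1)
    (h0 : χ ⟨0, hd⟩ = 1) (h0' : χ' ⟨0, hd⟩ = -1)
    (hrest : ∀ i : Fin d, i ≠ ⟨0, hd⟩ → χ' i = χ i) :
    let δ : (Fin d → ZMod 2) → ℕ := fun g => (Finset.univ.filter (fun i => g i ≠ 0)).card
    let lam : (Fin d → ℝ) → ℝ := fun ψ =>
      ∑ g ∈ Finset.univ.erase (0 : Fin d → ZMod 2), f (δ g) * ∏ i, (ψ i) ^ (g i).val
    let q : ℕ := (Finset.univ.filter (fun i : Fin d => i ≠ ⟨0, hd⟩ ∧ χ i = 1)).card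
    lam χ - lam χ' = 2 * ∑ l ∈ Finset.range (q + 1), (q.choose l : ℝ) * (-1 : ℝ) ^ (d - 1 - q) *
        ((fun F : ℕ → ℝ => fun y => F (y + 1) - F y)^[d - 1 - q] f) (l + 1) ∧
      0 < lam χ - lam χ' :=
  hypercube_eigenvalue_flip_general d hd f hf χ χ' hχ h0 h0' hrest
end

section
/- Let d ≥ 1, G = (ℤ/2)^d with Hamming distance δ, and f : ℤ₊ → ℝ₊ satisfying (−1)^m (Δ^m f)(x) > 0 for all m, x. The function λ : {−1,1}^d → ℝ, λ(χ) = ∑_{g ∈ G, g≠0} f(δ(g,0)) ∏_{i=1}^d χ_i^{g_i}, has a unique minimum at χ = (−1,…,−1). -/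
/-!
Write `λ(ψ) + f 0` as `∑_T f |T| ∏_{i ∈ T} ψ i` over subsets `T` of the coordinates and split
`T = A ∪ B` along the set `S` where `χ = -1`. The alternating sum over `A ⊆ S` is
`D(|B|) := (-1)^|S| Δ^|S| f (|B|)`, positive for `|B| ≥ 1`. Hence `λ(χ) + f 0 = ∑_{B ⊆ Sᶜ} D(|B|)`
while `λ(-1, …, -1) + f 0 = ∑_{B ⊆ Sᶜ} (-1)^|B| D(|B|)`, and the two differ by twice the sum of
`D(|B|)` over the odd `B ⊆ Sᶜ`, which is positive because `Sᶜ` is nonempty.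
-/

open Finset fwdDiff

lemma sum_powerset_neg_one_pow_mul_eq_fwdDiff_iter {α R : Type*} [CommRing R] (f : ℕ → R)
    (S : Finset α) (b : ℕ) :
    ∑ A ∈ S.powerset, (-1) ^ #A * f (#A + b) = (-1) ^ #S * (Δ_[1])^[#S] f b := by
  rw [sum_powerset_apply_card (fun n => (-1) ^ n * f (n + b)), fwdDiff_iter_eq_sum_shift,
    mul_sum]
  refine sum_congr rfl fun k hk => ?_
  obtain ⟨j, hj⟩ : ∃ j, #S = k + j := ⟨#S - k, by grind⟩
  rw [hj, Nat.add_sub_cancel_left, zsmul_eq_mul, nsmul_eq_mul, smul_eq_mul, add_comm b]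
  push_cast
  -- the signs match since `(-1) ^ (k + j) * (-1) ^ j = (-1) ^ k`
  ring_nf
  simp [pow_mul']

lemma sum_powerset_neg_one_pow_mul_lt_sum {α R : Type*} [Ring R] [LinearOrder R]
    [IsStrictOrderedRing R] {s : Finset α} (hs : s.Nonempty) (D : ℕ → R)
    (hD : ∀ b, 1 ≤ b → 0 < D b) :
    ∑ B ∈ s.powerset, (-1) ^ #B * D #B < ∑ B ∈ s.powerset, D #B := by
  obtain ⟨j, hj⟩ := hs
  refine sum_lt_sum (fun B _ => ?_) ⟨{j}, by simpa using hj, ?_⟩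
  · rcases (#B).eq_zero_or_pos with h | h
    · simp [h]
    · rcases neg_one_pow_eq_or R #B with h' | h'
      · rw [h', one_mul]
      · rw [h', neg_one_mul]; exact neg_le_self (hD _ h).le
  · simpa using neg_lt_self (hD 1 le_rfl)

section

variable {ι : Type*} [Fintype ι] [DecidableEq ι]

lemma sum_zmod_two_pi_eq_sum_finset {M : Type*} [AddCommMonoid M] (F : (ι → ZMod 2) → M) :
    ∑ g, F g = ∑ T : Finset ι, F fun i => if i ∈ T then 1 else 0 := by
  let e : Finset ι → ι → ZMod 2 := fun T i => if i ∈ T then 1 else 0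
  have he : e.Bijective := by
    refine ⟨fun T T' h => ?_, fun g => ⟨({i | g i ≠ 0} : Finset ι), funext fun i => ?_⟩⟩
    · ext i
      have := congrFun h i
      simp only [e] at this
      split_ifs at this <;> simp_all
    · rcases (by decide : ∀ x : ZMod 2, x = 0 ∨ x = 1) (g i) with h | h <;> simp [e, h]
  exact (Fintype.sum_bijective e he _ _ fun _ => rfl).symm

lemma sum_zmod_two_pi_mul_prod_pow {R : Type*} [CommSemiring R] (f : ℕ → R) (ψ : ι → R) :
    ∑ g : ι → ZMod 2, f #{i | g i ≠ 0} * ∏ i, ψ i ^ (g i).val =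
      ∑ T : Finset ι, f #T * ∏ i ∈ T, ψ i := by
  rw [sum_zmod_two_pi_eq_sum_finset]
  refine sum_congr rfl fun T _ => ?_
  simp [apply_ite, prod_ite_mem, ZMod.val_one]

lemma sum_univ_eq_sum_powerset_sum_powerset_compl {M : Type*} [AddCommMonoid M]
    (S : Finset ι) (F : Finset ι → M) :
    ∑ T, F T = ∑ A ∈ S.powerset, ∑ B ∈ Sᶜ.powerset, F (A ∪ B) := by
  rw [← sum_product']
  refine sum_nbij' (fun T => (T ∩ S, T ∩ Sᶜ)) (fun p => p.1 ∪ p.2) ?_ ?_ ?_ ?_ ?_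
  · intro T _; simp
  · intro p _; simp
  · intro T _; simp [← inter_union_distrib_left]
  · intro p hp
    simp only [mem_product, mem_powerset] at hp
    ext i <;> grind [mem_compl]
  · intro T _; simp [← inter_union_distrib_left]

lemma sum_card_mul_prod_eq_sum_powerset_compl {R : Type*} [CommRing R] (f : ℕ → R)
    (S : Finset ι) (ψ : ι → R) (c : R) (hS : ∀ i ∈ S, ψ i = -1) (hSc : ∀ i ∉ S, ψ i = c) :
    ∑ T, f #T * ∏ i ∈ T, ψ i = ∑ B ∈ Sᶜ.powerset, c ^ #B * ((-1) ^ #S * (Δ_[1])^[#S] f #B) := by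
  rw [sum_univ_eq_sum_powerset_sum_powerset_compl S, sum_comm]
  refine sum_congr rfl fun B hB => ?_
  rw [← sum_powerset_neg_one_pow_mul_eq_fwdDiff_iter, mul_sum]
  refine sum_congr rfl fun A hA => ?_
  rw [mem_powerset] at hA hB
  have hAB : Disjoint A B :=
    disjoint_of_subset_left hA (disjoint_of_subset_right hB disjoint_compl_right)
  rw [card_union_of_disjoint hAB, prod_union hAB, prod_congr rfl fun i hi => hS i (hA hi),
    prod_congr rfl fun i hi => hSc i (mem_compl.1 (hB hi)), prod_const, prod_const]
  ring

end

theorem hypercube_eigenvalue_unique_min_general (d : ℕ)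
    (f : ℕ → ℝ)
    (hf : ∀ m x : ℕ, 1 ≤ x →
      0 < (-1 : ℝ) ^ m * ((fun F : ℕ → ℝ => fun y => F (y + 1) - F y)^[m] f) x) :
    let δ : (Fin d → ZMod 2) → ℕ := fun g => (Finset.univ.filter (fun i => g i ≠ 0)).card
    let lam : (Fin d → ℝ) → ℝ := fun ψ =>
      ∑ g ∈ Finset.univ.erase (0 : Fin d → ZMod 2), f (δ g) * ∏ i, (ψ i) ^ (g i).val
    ∀ χ : Fin d → ℝ, (∀ i, χ i = 1 ∨ χ i = -1) → χ ≠ (fun _ => -1) →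
      lam (fun _ => -1) < lam χ := by
  intro δ lam χ hχ hne
  have hlam (ψ : Fin d → ℝ) : lam ψ = ∑ T : Finset (Fin d), f #T * ∏ i ∈ T, ψ i - f 0 := by
    simp [lam, δ, sum_erase_eq_sub, sum_zmod_two_pi_mul_prod_pow]
  set S : Finset (Fin d) := {i | χ i = -1}
  have hSc : Sᶜ.Nonempty := by
    obtain ⟨j, hj⟩ := Function.ne_iff.1 hne
    exact ⟨j, by simpa [S] using hj⟩
  have hD (b : ℕ) (hb : 1 ≤ b) : 0 < (-1) ^ #S * (Δ_[1])^[#S] f b := hf #S b hb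
  rw [hlam, hlam, sub_lt_sub_iff_right,
    sum_card_mul_prod_eq_sum_powerset_compl f S _ (-1) (fun _ _ => rfl) (fun _ _ => rfl),
    sum_card_mul_prod_eq_sum_powerset_compl f S χ 1 (by simp [S])
      (fun i hi => (hχ i).resolve_right (by simpa [S] using hi))]
  simpa using sum_powerset_neg_one_pow_mul_lt_sum hSc _ hD

theorem hypercube_eigenvalue_unique_min (d : ℕ) (hd : 1 ≤ d)
    (f : ℕ → ℝ) (hfpos : ∀ x : ℕ, 1 ≤ x → 0 < f x)
    (hf : ∀ m x : ℕ, 1 ≤ x →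
      0 < (-1 : ℝ) ^ m * ((fun F : ℕ → ℝ => fun y => F (y + 1) - F y)^[m] f) x) :
    let δ : (Fin d → ZMod 2) → ℕ := fun g => (Finset.univ.filter (fun i => g i ≠ 0)).card
    let lam : (Fin d → ℝ) → ℝ := fun ψ =>
      ∑ g ∈ Finset.univ.erase (0 : Fin d → ZMod 2), f (δ g) * ∏ i, (ψ i) ^ (g i).val
    ∀ χ : Fin d → ℝ, (∀ i, χ i = 1 ∨ χ i = -1) → χ ≠ (fun _ => -1) →
      lam (fun _ => -1) < lam χ :=
  hypercube_eigenvalue_unique_min_general d f hf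
end
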